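/- Fix n ≥ 3 and let fₙ : [1,n] → [1,n] be given by fₙ(x) = x + 1 for 1 ≤ x ≤ n−1 and fₙ(x) = −(n−1)x + n² − n + 1 for n−1 ≤ x ≤ n. Let c_{k,n} denote the number of solutions of fₙ^k(x) = x in [1, n]. Then c_{k,n} is finite for all k ≥ 1 and c_{k,n} = ∑_{i=1}^{n-1} c_{k−i,n} for all k ≥ n. -/

import Mathlib

/-!
Code a point of `[1, n]` by the intervals `[j, j + 1]` (`1 ≤ j ≤ n - 1`) its orbit visits: the
codes of points of period `k` are the `k`-periodic words in which every letter `j < n - 1` is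
followed by `j + 1`. Along such a word the inverse branches of `fₙ` compose to a contraction
(the branch on `[n - 1, n]` contracts by `1 / (n - 1)`), so every word codes exactly one point;
the only orbit meeting the endpoints of the intervals, `1 → 2 → ⋯ → n → 1`, is coded
consistently by taking left endpoints except at `n`. So `c_{k,n}` counts words. A word is a
cyclic concatenation of blocks `n - i, …, n - 1` with `1 ≤ i ≤ n - 1`; for `k ≥ n` the block
following the first letter `n - 1` does not wrap around, and cutting it out is a bijection onto
the words of period `k - i`.
-/

open Set

theorem Set.ncard_eq_sum_ncard_fiberwise {α β : Type*} [DecidableEq β] {s : Set α}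
    (hs : s.Finite) {g : α → β} {t : Finset β} (h : ∀ a ∈ s, g a ∈ t) :
    s.ncard = ∑ b ∈ t, {a ∈ s | g a = b}.ncard := by
  rw [ncard_eq_toFinset_card s hs,
    Finset.card_eq_sum_card_fiberwise fun a ha => h a (by simpa using ha)]
  refine Finset.sum_congr rfl fun b _ => ?_
  rw [ncard_eq_toFinset_card _ (hs.subset (sep_subset _ _))]
  congr 1
  ext a
  simp

theorem natCast_le_sub_one {j n : ℕ} (h : j < n) : (j : ℝ) ≤ n - 1 := by
  have : ((j + 1 : ℕ) : ℝ) ≤ n := by exact_mod_cast h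
  push_cast at this
  linarith

/-- The letter `j` stands for the interval `[j, j + 1]`. -/
structure IsWord (n k : ℕ) (w : ℕ → ℕ) : Prop where
  periodic : ∀ i, w (i + k) = w i
  one_le : ∀ i, 1 ≤ w i
  le : ∀ i, w i ≤ n - 1
  step : ∀ i, w i = n - 1 ∨ w (i + 1) = w i + 1

namespace IsWord

variable {n k : ℕ} {v w : ℕ → ℕ}

theorem add_of_forall_ne (hw : IsWord n k w) {i t : ℕ} (h : ∀ s < t, w (i + s) ≠ n - 1) :
    w (i + t) = w i + t := by
  induction t with
  | zero => rfl
  | succ t ih =>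
    have hstep := (hw.step (i + t)).resolve_left (h t t.lt_succ_self)
    rw [← add_assoc, hstep, ih fun s hs => h s (by omega)]
    ring

theorem le_of_forall_ne (hw : IsWord n k w) {i t : ℕ} (h : ∀ s < t, w (i + s) ≠ n - 1) :
    t ≤ n - 2 := by
  have := hw.add_of_forall_ne h
  have := hw.le (i + t)
  have := hw.one_le i
  omega

theorem exists_lt_apply_eq (hw : IsWord n k w) (hk : 1 ≤ k) (i : ℕ) :
    ∃ t < k, w (i + t) = n - 1 := by
  by_contra! h
  have := hw.add_of_forall_ne h
  rw [hw.periodic] at this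
  omega

theorem apply_mod (hw : IsWord n k w) (j : ℕ) : w (j % k) = w j := by
  conv_rhs => rw [← Nat.mod_add_div j k]
  induction j / k with
  | zero => rfl
  | succ q ih => rw [Nat.mul_succ, ← add_assoc, hw.periodic, ih]

theorem ext (hv : IsWord n k v) (hw : IsWord n k w) (hk : 1 ≤ k) (h : ∀ r < k, v r = w r) :
    v = w := by
  funext j
  rw [← hv.apply_mod, ← hw.apply_mod, h _ (Nat.mod_lt _ hk)]

end IsWord

theorem finite_setOf_isWord (n k : ℕ) (hk : 1 ≤ k) : {w | IsWord n k w}.Finite := by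
  refine (finite_range fun (v : Fin k → Fin n) j => (v ⟨j % k, Nat.mod_lt _ hk⟩ : ℕ)).subset
    fun w hw => ?_
  refine ⟨fun r => ⟨w r, ?_⟩, funext fun j => hw.apply_mod j⟩
  have := hw.le r
  have := hw.one_le r
  omega

def periodize (k : ℕ) (v : ℕ → ℕ) : ℕ → ℕ := fun j => v (j % k)

theorem isWord_periodize {n k : ℕ} {v : ℕ → ℕ} (hk : 1 ≤ k) (hv₁ : ∀ r < k, 1 ≤ v r)
    (hv₂ : ∀ r < k, v r ≤ n - 1) (hstep : ∀ r < k, v r = n - 1 ∨ v (r + 1) = v r + 1)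
    (hwrap : v k = v 0) : IsWord n k (periodize k v) where
  periodic j := by simp [periodize]
  one_le j := hv₁ _ (Nat.mod_lt _ hk)
  le j := hv₂ _ (Nat.mod_lt _ hk)
  step j := by
    have hr := Nat.mod_lt j hk
    unfold periodize
    rw [← Nat.mod_add_mod]
    rcases Nat.lt_or_ge (j % k + 1) k with h | h
    · rw [Nat.mod_eq_of_lt h]
      exact hstep _ hr
    · have hk' : j % k + 1 = k := by omega
      have h0 : v 0 = v (j % k + 1) := by rw [hk', hwrap]
      rw [hk', Nat.mod_self, h0]
      exact hstep _ hr

noncomputable def firstTop (n : ℕ) (w : ℕ → ℕ) : ℕ := sInf {s | w s = n - 1}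

noncomputable def blockLen (n : ℕ) (w : ℕ → ℕ) : ℕ :=
  sInf {t | 0 < t ∧ w (firstTop n w + t) = n - 1}

section Blocks

variable {n k m i : ℕ} {u w : ℕ → ℕ}

theorem firstTop_eq {s : ℕ} (hs : w s = n - 1) (h : ∀ r < s, w r ≠ n - 1) :
    firstTop n w = s :=
  le_antisymm (Nat.sInf_le hs)
    (le_of_not_gt fun hlt => h _ hlt (Nat.sInf_mem (s := {s | w s = n - 1}) ⟨s, hs⟩))

theorem blockLen_eq (hi : 0 < i) (h : w (firstTop n w + i) = n - 1)
    (hlt : ∀ t, 0 < t → t < i → w (firstTop n w + t) ≠ n - 1) : blockLen n w = i :=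
  le_antisymm (Nat.sInf_le ⟨hi, h⟩) (le_of_not_gt fun hl =>
    have hmem := Nat.sInf_mem (s := {t | 0 < t ∧ w (firstTop n w + t) = n - 1}) ⟨i, hi, h⟩
    hlt _ hmem.1 hl hmem.2)

namespace IsWord

theorem two_le (hw : IsWord n k w) : 2 ≤ n := by
  have := hw.one_le 0
  have := hw.le 0
  omega

theorem firstTop_spec (hw : IsWord n k w) (hk : 1 ≤ k) :
    w (firstTop n w) = n - 1 ∧ ∀ r < firstTop n w, w r ≠ n - 1 := by
  obtain ⟨t, -, ht⟩ := hw.exists_lt_apply_eq hk 0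
  exact ⟨Nat.sInf_mem (s := {s | w s = n - 1}) ⟨t, by simpa using ht⟩,
    fun r hr => Nat.notMem_of_lt_sInf (s := {s | w s = n - 1}) hr⟩

theorem firstTop_lt (hw : IsWord n k w) (hk : 1 ≤ k) : firstTop n w < k := by
  obtain ⟨t, htk, ht⟩ := hw.exists_lt_apply_eq hk 0
  exact (Nat.sInf_le (by simpa using ht)).trans_lt htk

theorem blockLen_spec (hw : IsWord n k w) (hk : 1 ≤ k) :
    0 < blockLen n w ∧ w (firstTop n w + blockLen n w) = n - 1 ∧
      ∀ t, 0 < t → t < blockLen n w → w (firstTop n w + t) ≠ n - 1 := by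
  obtain ⟨t, -, ht⟩ := hw.exists_lt_apply_eq hk (firstTop n w + 1)
  have hne : {t | 0 < t ∧ w (firstTop n w + t) = n - 1}.Nonempty :=
    ⟨t + 1, t.succ_pos, by rwa [← add_assoc, add_right_comm]⟩
  exact ⟨(Nat.sInf_mem hne).1, (Nat.sInf_mem hne).2,
    fun t ht hlt h => Nat.notMem_of_lt_sInf hlt ⟨ht, h⟩⟩

theorem blockLen_le (hw : IsWord n k w) (hk : 1 ≤ k) : blockLen n w ≤ n - 1 := by
  obtain ⟨hpos, -, hlt⟩ := hw.blockLen_spec hk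
  have := hw.le_of_forall_ne (i := firstTop n w + 1) (t := blockLen n w - 1)
    fun s hs => by rw [add_assoc, add_comm 1]; exact hlt _ (by omega) (by omega)
  have := hw.two_le
  omega

theorem apply_firstTop_add (hw : IsWord n k w) (hk : 1 ≤ k) {t : ℕ} (ht : 0 < t)
    (hti : t ≤ blockLen n w) : w (firstTop n w + t) = n - 1 - (blockLen n w - t) := by
  obtain ⟨-, htop, hlt⟩ := hw.blockLen_spec hk
  have hrun : ∀ t ≤ blockLen n w - 1, w (firstTop n w + 1 + t) = w (firstTop n w + 1) + t :=
    fun t ht => hw.add_of_forall_ne fun s hs => by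
      rw [add_assoc, add_comm 1]; exact hlt _ (by omega) (by omega)
  have h₁ := hrun (blockLen n w - 1) le_rfl
  have h₂ := hrun (t - 1) (by omega)
  rw [add_assoc, Nat.add_sub_cancel' (by omega : 1 ≤ blockLen n w), htop] at h₁
  rw [add_assoc, Nat.add_sub_cancel' ht] at h₂
  omega

theorem firstTop_add_blockLen_lt (hw : IsWord n k w) (hkn : n ≤ k) :
    firstTop n w + blockLen n w < k := by
  have := hw.two_le
  have hk : 1 ≤ k := by omega
  obtain ⟨-, hfirst⟩ := hw.firstTop_spec hk
  obtain ⟨-, -, hlt⟩ := hw.blockLen_spec hk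
  have hs := hw.firstTop_lt hk
  by_contra! hge
  have := hw.le_of_forall_ne (i := firstTop n w + 1) (t := k - 1) fun t ht => by
    rcases Nat.lt_or_ge (firstTop n w + 1 + t) k with h | h
    · rw [add_assoc]; exact hlt _ (by omega) (by omega)
    · have hr := hfirst (firstTop n w + 1 + t - k) (by omega)
      rwa [← hw.periodic, Nat.sub_add_cancel h] at hr
  omega

end IsWord

noncomputable def deleteBlock (n k : ℕ) (w : ℕ → ℕ) : ℕ → ℕ :=
  periodize (k - blockLen n w) fun r =>
    if r ≤ firstTop n w then w r else w (r + blockLen n w)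

/-- The inserted letters are `n - i, …, n - 1`. -/
noncomputable def insertBlock (n m i : ℕ) (u : ℕ → ℕ) : ℕ → ℕ :=
  periodize (m + i) fun r =>
    if r ≤ firstTop n u then u r
    else if r ≤ firstTop n u + i then n - 1 - (firstTop n u + i - r) else u (r - i)

theorem isWord_deleteBlock (hw : IsWord n k w) (hlt : firstTop n w + blockLen n w < k) :
    IsWord n (k - blockLen n w) (deleteBlock n k w) := by
  have hk : 1 ≤ k := by omega
  obtain ⟨hs, -⟩ := hw.firstTop_spec hk
  refine isWord_periodize (by omega) (fun r _ => ?_) (fun r _ => ?_) (fun r _ => ?_) ?_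
  · split_ifs <;> exact hw.one_le _
  · split_ifs <;> exact hw.le _
  · rcases lt_trichotomy r (firstTop n w) with h | rfl | h
    · rw [if_pos h.le, if_pos (Nat.succ_le_of_lt h)]
      exact hw.step r
    · exact .inl (by rwa [if_pos le_rfl])
    · rw [if_neg h.not_ge, if_neg (by omega), add_right_comm]
      exact hw.step _
  · rw [if_neg (by omega), if_pos (Nat.zero_le _), Nat.sub_add_cancel (by omega), ← zero_add k,
      hw.periodic]

theorem deleteBlock_apply (hlt : firstTop n w + blockLen n w < k) {j : ℕ}
    (hj : j ≤ firstTop n w) : deleteBlock n k w j = w j := by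
  rw [deleteBlock, periodize, Nat.mod_eq_of_lt (by omega), if_pos hj]

theorem IsWord.firstTop_deleteBlock (hw : IsWord n k w)
    (hlt : firstTop n w + blockLen n w < k) : firstTop n (deleteBlock n k w) = firstTop n w := by
  obtain ⟨hs, hfirst⟩ := hw.firstTop_spec (by omega)
  exact firstTop_eq (by rwa [deleteBlock_apply hlt le_rfl])
    fun r hr => by rw [deleteBlock_apply hlt hr.le]; exact hfirst r hr

theorem isWord_insertBlock (hu : IsWord n m u) (hm : 1 ≤ m) (hi : 1 ≤ i) (hin : i ≤ n - 1) :
    IsWord n (m + i) (insertBlock n m i u) := by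
  obtain ⟨hs, -⟩ := hu.firstTop_spec hm
  have hsm := hu.firstTop_lt hm
  refine isWord_periodize (by omega) (fun r _ => ?_) (fun r _ => ?_) (fun r _ => ?_) ?_
  · split_ifs
    · exact hu.one_le _
    · omega
    · exact hu.one_le _
  · split_ifs
    · exact hu.le _
    · omega
    · exact hu.le _
  · rcases lt_trichotomy r (firstTop n u) with h | rfl | h
    · rw [if_pos h.le, if_pos (Nat.succ_le_of_lt h)]
      exact hu.step r
    · exact .inl (by rwa [if_pos le_rfl])
    · rw [if_neg h.not_ge, if_neg (show ¬r + 1 ≤ firstTop n u by omega)]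
      rcases lt_trichotomy r (firstTop n u + i) with h' | rfl | h'
      · rw [if_pos h'.le, if_pos (Nat.succ_le_of_lt h')]
        omega
      · rw [if_pos le_rfl]
        omega
      · rw [if_neg h'.not_ge, if_neg (show ¬r + 1 ≤ firstTop n u + i by omega),
          show r + 1 - i = r - i + 1 by omega]
        exact hu.step _
  · rw [if_neg (show ¬m + i ≤ firstTop n u by omega),
      if_neg (show ¬m + i ≤ firstTop n u + i by omega), if_pos (Nat.zero_le _),
      Nat.add_sub_cancel, ← zero_add m, hu.periodic]

theorem IsWord.insertBlock_apply (hu : IsWord n m u) (hm : 1 ≤ m) {j : ℕ}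
    (hj : j ≤ firstTop n u + i) :
    insertBlock n m i u j =
      if j ≤ firstTop n u then u j else n - 1 - (firstTop n u + i - j) := by
  have hsm := hu.firstTop_lt hm
  rw [insertBlock, periodize, Nat.mod_eq_of_lt (by omega)]
  split_ifs <;> rfl

theorem IsWord.firstTop_insertBlock (hu : IsWord n m u) (hm : 1 ≤ m) :
    firstTop n (insertBlock n m i u) = firstTop n u := by
  obtain ⟨hs, hfirst⟩ := hu.firstTop_spec hm
  refine firstTop_eq ?_ fun r hr => ?_
  · rwa [hu.insertBlock_apply hm (by omega), if_pos le_rfl]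
  · rw [hu.insertBlock_apply hm (by omega), if_pos hr.le]
    exact hfirst r hr

theorem IsWord.blockLen_insertBlock (hu : IsWord n m u) (hm : 1 ≤ m) (hi : 1 ≤ i)
    (hin : i ≤ n - 1) : blockLen n (insertBlock n m i u) = i := by
  refine blockLen_eq hi ?_ fun t ht hti => ?_ <;>
  · rw [hu.firstTop_insertBlock hm, hu.insertBlock_apply hm (by omega), if_neg (by omega)]
    omega

theorem IsWord.deleteBlock_insertBlock (hu : IsWord n m u) (hm : 1 ≤ m) (hi : 1 ≤ i)
    (hin : i ≤ n - 1) : deleteBlock n (m + i) (insertBlock n m i u) = u := by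
  have hv := isWord_insertBlock hu hm hi hin
  have hsm := hu.firstTop_lt hm
  have hd := isWord_deleteBlock hv
    (by rw [hu.firstTop_insertBlock hm, hu.blockLen_insertBlock hm hi hin]; omega)
  rw [hu.blockLen_insertBlock hm hi hin, Nat.add_sub_cancel] at hd
  refine hd.ext hu hm fun r hr => ?_
  rw [deleteBlock, periodize, hu.blockLen_insertBlock hm hi hin, Nat.add_sub_cancel,
    Nat.mod_eq_of_lt hr, hu.firstTop_insertBlock hm]
  by_cases h : r ≤ firstTop n u
  · rw [if_pos h, hu.insertBlock_apply hm (by omega), if_pos h]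
  · rw [if_neg h, insertBlock, periodize, Nat.mod_eq_of_lt (show r + i < m + i by omega),
      if_neg (show ¬r + i ≤ firstTop n u by omega),
      if_neg (show ¬r + i ≤ firstTop n u + i by omega), Nat.add_sub_cancel]

theorem IsWord.insertBlock_deleteBlock (hw : IsWord n k w) (hkn : n ≤ k) :
    insertBlock n (k - blockLen n w) (blockLen n w) (deleteBlock n k w) = w := by
  have hk : 1 ≤ k := by have := hw.two_le; omega
  have hlt := hw.firstTop_add_blockLen_lt hkn
  have hd := isWord_deleteBlock hw hlt
  have hpos := (hw.blockLen_spec hk).1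
  have hv := isWord_insertBlock hd (by omega) hpos (hw.blockLen_le hk)
  rw [Nat.sub_add_cancel (by omega)] at hv
  refine hv.ext hw hk fun r hr => ?_
  rw [insertBlock, periodize, Nat.sub_add_cancel (by omega), Nat.mod_eq_of_lt hr,
    hw.firstTop_deleteBlock hlt]
  split_ifs with h₁ h₂
  · exact deleteBlock_apply hlt h₁
  · have := hw.apply_firstTop_add hk (t := r - firstTop n w) (by omega) (by omega)
    rw [Nat.add_sub_cancel' (by omega)] at this
    rw [this]
    omega
  · rw [deleteBlock, periodize,
      Nat.mod_eq_of_lt (show r - blockLen n w < k - blockLen n w by omega),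
      if_neg (show ¬r - blockLen n w ≤ firstTop n w by omega), Nat.sub_add_cancel (by omega)]

theorem ncard_setOf_isWord (hn : 1 ≤ n) (hkn : n ≤ k) :
    {w | IsWord n k w}.ncard = ∑ i ∈ Finset.Icc 1 (n - 1), {u | IsWord n (k - i) u}.ncard := by
  have hk : 1 ≤ k := by omega
  rw [Set.ncard_eq_sum_ncard_fiberwise (finite_setOf_isWord n k hk) (g := blockLen n)
    fun w hw => Finset.mem_Icc.2 ⟨(hw.blockLen_spec hk).1, hw.blockLen_le hk⟩]
  refine Finset.sum_congr rfl fun i hi => ?_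
  obtain ⟨hi₁, hin⟩ := Finset.mem_Icc.1 hi
  refine Set.BijOn.ncard_eq (f := deleteBlock n k) ⟨?_, ?_, ?_⟩
  · rintro w ⟨hw, rfl⟩
    exact isWord_deleteBlock hw (hw.firstTop_add_blockLen_lt hkn)
  · rintro w ⟨hw, rfl⟩ v ⟨hv, hvi⟩ h
    rw [← hw.insertBlock_deleteBlock hkn, ← hv.insertBlock_deleteBlock hkn, h, hvi]
  · intro u hu
    have hm : 1 ≤ k - i := by omega
    have hki : k - i + i = k := by omega
    refine ⟨insertBlock n (k - i) i u, ⟨?_, ?_⟩, ?_⟩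
    · have := isWord_insertBlock hu hm hi₁ hin
      rwa [hki] at this
    · exact hu.blockLen_insertBlock hm hi₁ hin
    · simpa only [hki] using hu.deleteBlock_insertBlock hm hi₁ hin

end Blocks

structure AgreesWithFn (n : ℕ) (f : ℝ → ℝ) : Prop where
  shift : ∀ x : ℝ, 1 ≤ x → x ≤ n - 1 → f x = x + 1
  top : ∀ x : ℝ, (n : ℝ) - 1 ≤ x → x ≤ n → f x = -((n : ℝ) - 1) * x + n ^ 2 - n + 1

/-- The inverse of `fₙ` on `[j, j + 1]`, for `1 ≤ j ≤ n - 1`. -/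
noncomputable def invBranch (n j : ℕ) (y : ℝ) : ℝ :=
  if j = n - 1 then ((n : ℝ) ^ 2 - n + 1 - y) / (n - 1) else y - 1

noncomputable def branchComp (n : ℕ) (w : ℕ → ℕ) : ℕ → ℕ → ℝ → ℝ
  | _, 0 => id
  | i, m + 1 => invBranch n (w i) ∘ branchComp n w (i + 1) m

section Branches

variable {n k : ℕ} {w : ℕ → ℕ}

theorem branchComp_succ' (i m : ℕ) :
    branchComp n w i (m + 1) = branchComp n w i m ∘ invBranch n (w (i + m)) := by
  induction m generalizing i with
  | zero => rfl
  | succ m ih =>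
    rw [branchComp, ih (i + 1), branchComp, add_right_comm, add_assoc]
    rfl

theorem IsWord.branchComp_add_period (hw : IsWord n k w) (i m : ℕ) :
    branchComp n w (i + k) m = branchComp n w i m := by
  induction m generalizing i with
  | zero => rfl
  | succ m ih => rw [branchComp, branchComp, hw.periodic, add_right_comm, ih]

theorem dist_invBranch_top (x y : ℝ) :
    dist (invBranch n (n - 1) x) (invBranch n (n - 1) y) = dist x y / |(n : ℝ) - 1| := by
  simp only [invBranch, ↓reduceIte]
  rw [Real.dist_eq, Real.dist_eq, ← sub_div, abs_div,
    show (n : ℝ) ^ 2 - n + 1 - x - ((n : ℝ) ^ 2 - n + 1 - y) = -(x - y) by ring, abs_neg]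

theorem lipschitzWith_invBranch (hn : 2 ≤ n) (j : ℕ) : LipschitzWith 1 (invBranch n j) := by
  have hn' : (2 : ℝ) ≤ n := by exact_mod_cast hn
  refine LipschitzWith.of_dist_le_mul fun x y => ?_
  rw [NNReal.coe_one, one_mul]
  by_cases h : j = n - 1
  · rw [h, dist_invBranch_top, abs_of_pos (by linarith)]
    exact div_le_self dist_nonneg (by linarith)
  · simp only [invBranch, h, ↓reduceIte, Real.dist_eq, sub_sub_sub_cancel_right, le_refl]

theorem lipschitzWith_invBranch_top (hn : 3 ≤ n) :
    LipschitzWith 2⁻¹ (invBranch n (n - 1)) := by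
  have hn' : (3 : ℝ) ≤ n := by exact_mod_cast hn
  refine LipschitzWith.of_dist_le_mul fun x y => ?_
  rw [dist_invBranch_top, abs_of_pos (by linarith), NNReal.coe_inv, NNReal.coe_ofNat,
    inv_mul_eq_div]
  exact div_le_div_of_nonneg_left dist_nonneg (by norm_num) (by linarith)

theorem lipschitzWith_branchComp (hn : 2 ≤ n) (w : ℕ → ℕ) (i m : ℕ) :
    LipschitzWith 1 (branchComp n w i m) := by
  induction m generalizing i with
  | zero => exact LipschitzWith.id
  | succ m ih =>
    rw [branchComp]
    simpa using (lipschitzWith_invBranch hn (w i)).comp (ih (i + 1))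

theorem lipschitzWith_branchComp_of_top (hn : 3 ≤ n) {i m : ℕ}
    (h : ∃ t < m, w (i + t) = n - 1) : LipschitzWith 2⁻¹ (branchComp n w i m) := by
  induction m generalizing i with
  | zero => obtain ⟨t, ht, -⟩ := h; omega
  | succ m ih =>
    rw [branchComp]
    by_cases hwi : w i = n - 1
    · rw [hwi]
      simpa using (lipschitzWith_invBranch_top hn).comp
        (lipschitzWith_branchComp (by omega) w (i + 1) m)
    · obtain ⟨t, ht, hwt⟩ := h
      obtain ⟨t, rfl⟩ : ∃ s, t = s + 1 := ⟨t - 1, by rcases t with _ | t <;> simp_all⟩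
      simpa using (lipschitzWith_invBranch (by omega) (w i)).comp
        (ih ⟨t, by omega, by rwa [add_right_comm, add_assoc]⟩)

theorem IsWord.contractingWith_branchComp (hw : IsWord n k w) (hn : 3 ≤ n) (hk : 1 ≤ k)
    (i : ℕ) : ContractingWith 2⁻¹ (branchComp n w i k) :=
  ⟨by norm_num, lipschitzWith_branchComp_of_top hn (hw.exists_lt_apply_eq hk i)⟩

end Branches

structure IsOrbitAlong (f : ℝ → ℝ) (w : ℕ → ℕ) (y : ℕ → ℝ) : Prop where
  mem : ∀ i, y i ∈ Icc (w i : ℝ) (w i + 1)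
  map : ∀ i, f (y i) = y (i + 1)

/-- At an integer `y < n` this picks the interval `[y, y + 1]`, at `y = n` the interval
`[n - 1, n]`. -/
noncomputable def letter (n : ℕ) (y : ℝ) : ℕ := min ⌊y⌋₊ (n - 1)

noncomputable def itinerary (n : ℕ) (f : ℝ → ℝ) (x : ℝ) : ℕ → ℕ :=
  fun i => letter n (f^[i] x)

section Dynamics

variable {n k : ℕ} {f : ℝ → ℝ} {w : ℕ → ℕ} {y : ℕ → ℝ}

theorem IsWord.cast_add_one_le (hw : IsWord n k w) (i : ℕ) : (w i : ℝ) + 1 ≤ n := by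
  have := natCast_le_sub_one (show w i < n by have := hw.le i; have := hw.one_le i; omega)
  linarith

theorem IsWord.one_le_cast (hw : IsWord n k w) (i : ℕ) : (1 : ℝ) ≤ w i := by
  exact_mod_cast hw.one_le i

theorem IsWord.cast_eq_of_eq (hw : IsWord n k w) {i : ℕ} (h : w i = n - 1) :
    (w i : ℝ) = n - 1 := by
  rw [h, Nat.cast_pred (by have := hw.two_le; omega)]

theorem IsWord.cast_add_one_le_of_ne (hw : IsWord n k w) {i : ℕ} (h : w i ≠ n - 1) :
    (w i : ℝ) + 1 ≤ n - 1 := by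
  have := natCast_le_sub_one (show w i + 1 < n by have := hw.le i; omega)
  push_cast at this
  exact this

theorem IsWord.invBranch_mem (hw : IsWord n k w) (i : ℕ) {y : ℝ}
    (hy : y ∈ Icc (w (i + 1) : ℝ) (w (i + 1) + 1)) :
    invBranch n (w i) y ∈ Icc (w i : ℝ) (w i + 1) := by
  have hy₁ := (hw.one_le_cast (i + 1)).trans hy.1
  have hy₂ := hy.2.trans (hw.cast_add_one_le (i + 1))
  rcases hw.step i with h | h
  · have hwi := hw.cast_eq_of_eq h
    have hn : (2 : ℝ) ≤ n := by linarith [hw.one_le_cast i]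
    rw [invBranch, if_pos h, hwi]
    constructor
    · rw [le_div_iff₀ (by linarith)]; nlinarith
    · rw [div_le_iff₀ (by linarith)]; nlinarith
  · have hwi : (w (i + 1) : ℝ) = w i + 1 := by exact_mod_cast h
    rw [invBranch, if_neg (show ¬w i = n - 1 by have := hw.le (i + 1); omega)]
    constructor <;> linarith [hy.1, hy.2]

theorem IsWord.mapsTo_branchComp (hw : IsWord n k w) (i m : ℕ) :
    MapsTo (branchComp n w i m) (Icc (w (i + m) : ℝ) (w (i + m) + 1))
      (Icc (w i : ℝ) (w i + 1)) := by
  induction m generalizing i with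
  | zero => exact mapsTo_id _
  | succ m ih =>
    intro x hx
    exact hw.invBranch_mem i (ih (i + 1) (by rwa [add_right_comm, add_assoc]))

namespace AgreesWithFn

theorem apply_invBranch (hf : AgreesWithFn n f) (hw : IsWord n k w) (i : ℕ)
    {y : ℝ} (hy : y ∈ Icc (w (i + 1) : ℝ) (w (i + 1) + 1)) : f (invBranch n (w i) y) = y := by
  have hmem := hw.invBranch_mem i hy
  rcases hw.step i with h | h
  · have hwi := hw.cast_eq_of_eq h
    have hn : (2 : ℝ) ≤ n := by linarith [hw.one_le_cast i]
    rw [hf.top _ (hwi ▸ hmem.1) (by linarith [hmem.2]), invBranch, if_pos h]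
    field_simp [show (n : ℝ) - 1 ≠ 0 by linarith]
    ring
  · have hne : w i ≠ n - 1 := by have := hw.le (i + 1); omega
    have := hw.cast_add_one_le_of_ne hne
    rw [hf.shift _ ((hw.one_le_cast i).trans hmem.1) (by linarith [hmem.2]), invBranch,
      if_neg hne]
    ring

theorem invBranch_apply (hf : AgreesWithFn n f) (hn : 2 ≤ n) {j : ℕ} (hj₁ : 1 ≤ j)
    (hjn : j ≤ n - 1) {y : ℝ} (hy : y ∈ Icc (j : ℝ) (j + 1)) : invBranch n j (f y) = y := by
  have hn' : (2 : ℝ) ≤ n := by exact_mod_cast hn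
  have hy₁ : (1 : ℝ) ≤ y := le_trans (by exact_mod_cast hj₁) hy.1
  by_cases h : j = n - 1
  · have hj : (j : ℝ) = n - 1 := by rw [h, Nat.cast_pred (by omega)]
    rw [invBranch, if_pos h, hf.top y (hj ▸ hy.1) (by linarith [hy.2])]
    field_simp [show (n : ℝ) - 1 ≠ 0 by linarith]
    ring
  · have hj := natCast_le_sub_one (show j + 1 < n by omega)
    push_cast at hj
    rw [invBranch, if_neg h, hf.shift y hy₁ (by linarith [hy.2])]
    ring

theorem mapsTo (hf : AgreesWithFn n f) (hn : 2 ≤ n) : MapsTo f (Icc 1 n) (Icc 1 n) := by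
  have hn' : (2 : ℝ) ≤ n := by exact_mod_cast hn
  intro x hx
  rcases le_or_gt x (n - 1) with h | h
  · rw [hf.shift x hx.1 h]
    constructor <;> linarith [hx.1]
  · rw [hf.top x h.le hx.2]
    constructor <;> nlinarith [hx.2]

end AgreesWithFn

theorem IsWord.exists_orbit (hw : IsWord n k w) (hf : AgreesWithFn n f) (hn : 3 ≤ n)
    (hk : 1 ≤ k) : ∃ y, IsOrbitAlong f w y ∧ ∀ i, y (i + k) = y i := by
  have hc := hw.contractingWith_branchComp hn hk
  set y : ℕ → ℝ := fun i => ContractingWith.fixedPoint _ (hc i)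
  have hfix (i : ℕ) : Function.IsFixedPt (branchComp n w i k) (y i) := (hc i).fixedPoint_isFixedPt
  have hmem (i : ℕ) : y i ∈ Icc (w i : ℝ) (w i + 1) := by
    have hmaps := hw.mapsTo_branchComp i k
    rw [hw.periodic] at hmaps
    exact isClosed_Icc.mem_of_tendsto ((hc i).tendsto_iterate_fixedPoint (w i : ℝ))
      (Filter.Eventually.of_forall fun m => hmaps.iterate m ⟨le_rfl, by linarith⟩)
  have hback (i : ℕ) : invBranch n (w i) (y (i + 1)) = y i := by
    refine (hc i).fixedPoint_unique ?_
    calc branchComp n w i k (invBranch n (w i) (y (i + 1)))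
        = branchComp n w i (k + 1) (y (i + 1)) := by
          rw [branchComp_succ', Function.comp_apply, hw.periodic]
      _ = invBranch n (w i) (y (i + 1)) := by
          rw [branchComp, Function.comp_apply, (hfix (i + 1)).eq]
  refine ⟨y, ⟨hmem, fun i => ?_⟩, fun i => ((hc (i + k)).fixedPoint_unique ?_).symm⟩
  · rw [← hback i]
    exact hf.apply_invBranch hw i (hmem (i + 1))
  · rw [Function.IsFixedPt, hw.branchComp_add_period]
    exact hfix i

theorem branchComp_apply_of_invBranch (h : ∀ j, invBranch n (w j) (y (j + 1)) = y j) (i m : ℕ) :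
    branchComp n w i m (y (i + m)) = y i := by
  induction m generalizing i with
  | zero => rfl
  | succ m ih => rw [branchComp, Function.comp_apply, ← add_assoc, add_right_comm, ih, h]

end Dynamics

section Letters

variable {n k : ℕ} {f : ℝ → ℝ} {w : ℕ → ℕ} {y : ℕ → ℝ}

theorem letter_le (y : ℝ) : letter n y ≤ n - 1 := min_le_right _ _

theorem one_le_letter (hn : 2 ≤ n) {y : ℝ} (hy : 1 ≤ y) : 1 ≤ letter n y :=
  le_min (Nat.le_floor (by exact_mod_cast hy)) (by omega)

theorem mem_Icc_letter (hn : 1 ≤ n) {y : ℝ} (hy : y ∈ Icc (1 : ℝ) n) :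
    y ∈ Icc (letter n y : ℝ) (letter n y + 1) := by
  rcases le_or_gt ⌊y⌋₊ (n - 1) with h | h
  · rw [letter, min_eq_left h]
    exact ⟨Nat.floor_le (by linarith [hy.1]), (Nat.lt_floor_add_one y).le⟩
  · have : (n : ℝ) ≤ y :=
      le_trans (by exact_mod_cast (by omega : n ≤ ⌊y⌋₊)) (Nat.floor_le (by linarith [hy.1]))
    rw [letter, min_eq_right h.le, Nat.cast_pred hn]
    constructor <;> linarith [hy.2]

theorem letter_eq_of_mem {j : ℕ} (hjn : j ≤ n - 1) {y : ℝ} (hy : y ∈ Icc (j : ℝ) (j + 1))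
    (h : y ≠ j + 1 ∨ j = n - 1) : letter n y = j := by
  rcases hy.2.lt_or_eq with hlt | heq
  · rw [letter, (Nat.floor_eq_iff (by linarith [hy.1, (Nat.cast_nonneg j : (0 : ℝ) ≤ j)])).2
      ⟨hy.1, hlt⟩, min_eq_left hjn]
  · have hj := h.resolve_left (not_not.2 heq)
    rw [letter, heq, show (j : ℝ) + 1 = ((j + 1 : ℕ) : ℝ) by push_cast; ring,
      Nat.floor_natCast]
    omega

namespace AgreesWithFn

theorem letter_apply (hf : AgreesWithFn n f) {y : ℝ} (hy : y ∈ Icc (1 : ℝ) n)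
    (h : letter n y ≠ n - 1) : letter n (f y) = letter n y + 1 := by
  have hfl : ⌊y⌋₊ + 1 ≤ n - 1 := by rw [letter] at h; omega
  have hyn : y ≤ n - 1 := by
    have := natCast_le_sub_one (show ⌊y⌋₊ + 1 < n by omega)
    push_cast at this
    linarith [Nat.lt_floor_add_one y]
  rw [hf.shift y hy.1 hyn, letter, letter, Nat.floor_add_one (by linarith [hy.1])]
  omega

theorem isWord_itinerary (hf : AgreesWithFn n f) (hn : 2 ≤ n) {x : ℝ}
    (hx : x ∈ Icc (1 : ℝ) n) (hfix : f^[k] x = x) : IsWord n k (itinerary n f x) where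
  periodic i := by simp only [itinerary, Function.iterate_add_apply, hfix]
  one_le i := one_le_letter hn ((hf.mapsTo hn).iterate i hx).1
  le i := letter_le _
  step i := by
    by_cases h : letter n (f^[i] x) = n - 1
    · exact .inl h
    · right
      simp only [itinerary, Function.iterate_succ_apply']
      exact hf.letter_apply ((hf.mapsTo hn).iterate i hx) h

theorem isFixedPt_branchComp_itinerary (hf : AgreesWithFn n f) (hn : 2 ≤ n) {x : ℝ}
    (hx : x ∈ Icc (1 : ℝ) n) (hfix : f^[k] x = x) :
    Function.IsFixedPt (branchComp n (itinerary n f x) 0 k) x := by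
  have horbit (j : ℕ) : f^[j] x ∈ Icc (1 : ℝ) n := (hf.mapsTo hn).iterate j hx
  have := branchComp_apply_of_invBranch (y := fun j => f^[j] x) (fun j => by
    simp only [Function.iterate_succ_apply']
    exact hf.invBranch_apply hn (one_le_letter hn (horbit j).1) (letter_le _)
      (mem_Icc_letter (by omega) (horbit j))) 0 k
  simp only [zero_add, hfix, Function.iterate_zero_apply] at this
  exact this

end AgreesWithFn

namespace IsOrbitAlong

theorem left_or_top_endpoint_succ (hy : IsOrbitAlong f w y) (hf : AgreesWithFn n f)
    (hw : IsWord n k w) {j : ℕ} (h : y j = w j ∨ (y j = n ∧ w j = n - 1)) :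
    y (j + 1) = w (j + 1) ∨ (y (j + 1) = n ∧ w (j + 1) = n - 1) := by
  have hnext := hy.mem (j + 1)
  rw [← hy.map j] at hnext ⊢
  rcases h with h | ⟨h, htop⟩
  · by_cases htop : w j = n - 1
    · have hwj := hw.cast_eq_of_eq htop
      rw [h, hf.shift _ (hw.one_le_cast j) hwj.le, hwj, sub_add_cancel] at hnext ⊢
      have : n ≤ w (j + 1) + 1 := by exact_mod_cast hnext.2
      exact .inr ⟨rfl, by have := hw.le (j + 1); omega⟩
    · have hstep : (w (j + 1) : ℝ) = w j + 1 := by exact_mod_cast (hw.step j).resolve_left htop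
      have := hw.cast_add_one_le_of_ne htop
      rw [h, hf.shift _ (hw.one_le_cast j) (by linarith), hstep]
      exact .inl rfl
  · have hn : (2 : ℝ) ≤ n := by linarith [hw.cast_add_one_le j, hw.one_le_cast j]
    rw [h, hf.top _ (by linarith) le_rfl] at hnext ⊢
    have : w (j + 1) ≤ 1 := by exact_mod_cast (by linarith [hnext.1] : (w (j + 1) : ℝ) ≤ 1)
    left
    rw [le_antisymm this (hw.one_le _)]
    push_cast
    ring

theorem right_endpoint_succ (hy : IsOrbitAlong f w y) (hf : AgreesWithFn n f)
    (hw : IsWord n k w) {j : ℕ} (h : y j = w j + 1) (hj : w j ≠ n - 1) :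
    w (j + 1) = w j + 1 ∧ y (j + 1) = w (j + 1) + 1 := by
  have hstep := (hw.step j).resolve_left hj
  refine ⟨hstep, ?_⟩
  rw [← hy.map j, h, hf.shift _ (by linarith [hw.one_le_cast j]) (hw.cast_add_one_le_of_ne hj),
    hstep]
  push_cast
  ring

/-- From a right endpoint `w i + 1 < n` the orbit climbs through right endpoints up to `n`, and
from then on visits only left endpoints and `n`; so it never returns, contradicting periodicity. -/
theorem letter_eq (hy : IsOrbitAlong f w y) (hf : AgreesWithFn n f) (hw : IsWord n k w)
    (hk : 1 ≤ k) (hper : ∀ i, y (i + k) = y i) (i : ℕ) : letter n (y i) = w i := by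
  refine letter_eq_of_mem (hw.le i) (hy.mem i) ?_
  by_contra! hbad
  have key (t : ℕ) :
      (y (i + t) = w (i + t) + 1 ∧ w (i + t) ≠ n - 1 ∧ w (i + t) = w i + t) ∨
      (y (i + t) = w (i + t) ∨ (y (i + t) = n ∧ w (i + t) = n - 1)) := by
    induction t with
    | zero => exact .inl ⟨hbad.1, hbad.2, rfl⟩
    | succ t ih =>
      rw [← add_assoc]
      rcases ih with ⟨hb, hne, hwt⟩ | hg
      · obtain ⟨hw', hy'⟩ := hy.right_endpoint_succ hf hw hb hne
        by_cases htop : w (i + t + 1) = n - 1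
        · refine .inr (.inr ⟨?_, htop⟩)
          rw [hy', hw.cast_eq_of_eq htop]
          ring
        · exact .inl ⟨hy', htop, by omega⟩
      · exact .inr (hy.left_or_top_endpoint_succ hf hw hg)
  rcases key k with ⟨-, -, h⟩ | h
  · rw [hw.periodic] at h
    omega
  · rw [hper, hw.periodic] at h
    rcases h with h | ⟨-, h⟩
    · linarith [hbad.1]
    · exact hbad.2 h

end IsOrbitAlong

end Letters

theorem AgreesWithFn.bijOn_itinerary {n k : ℕ} {f : ℝ → ℝ} (hf : AgreesWithFn n f)
    (hn : 3 ≤ n) (hk : 1 ≤ k) :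
    BijOn (itinerary n f) {x | x ∈ Icc 1 (n : ℝ) ∧ f^[k] x = x} {w | IsWord n k w} := by
  refine ⟨fun x hx => hf.isWord_itinerary (by omega) hx.1 hx.2, fun x hx x' hx' h => ?_,
    fun w hw => ?_⟩
  · have hc := (hf.isWord_itinerary (by omega) hx.1 hx.2).contractingWith_branchComp hn hk 0
    refine hc.fixedPoint_unique' (hf.isFixedPt_branchComp_itinerary (by omega) hx.1 hx.2) ?_
    rw [h]
    exact hf.isFixedPt_branchComp_itinerary (by omega) hx'.1 hx'.2
  · obtain ⟨y, hy, hper⟩ := hw.exists_orbit hf hn hk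
    have hiter (i : ℕ) : f^[i] (y 0) = y i := by
      induction i with
      | zero => rfl
      | succ i ih => rw [Function.iterate_succ_apply', ih, hy.map]
    refine ⟨y 0, ⟨⟨(hw.one_le_cast 0).trans (hy.mem 0).1, (hy.mem 0).2.trans
      (hw.cast_add_one_le 0)⟩, by rw [hiter, ← zero_add k, hper]⟩, funext fun i => ?_⟩
    rw [itinerary, hiter]
    exact hy.letter_eq hf hw hk hper i

theorem stmt_9 (n : ℕ) (hn : 3 ≤ n) (f : ℝ → ℝ)
    (h1 : ∀ x : ℝ, 1 ≤ x → x ≤ n - 1 → f x = x + 1)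
    (h2 : ∀ x : ℝ, (n : ℝ) - 1 ≤ x → x ≤ n →
      f x = -((n : ℝ) - 1) * x + n ^ 2 - n + 1) :
    (∀ k : ℕ, 1 ≤ k → {x : ℝ | x ∈ Set.Icc 1 (n : ℝ) ∧ f^[k] x = x}.Finite) ∧
    (∀ k : ℕ, n ≤ k →
      {x : ℝ | x ∈ Set.Icc 1 (n : ℝ) ∧ f^[k] x = x}.ncard
        = ∑ i ∈ Finset.Icc 1 (n - 1),
            {x : ℝ | x ∈ Set.Icc 1 (n : ℝ) ∧ f^[k - i] x = x}.ncard) := by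
  have hf : AgreesWithFn n f := ⟨h1, h2⟩
  refine ⟨fun k hk => (hf.bijOn_itinerary hn hk).finite_iff_finite.2
    (finite_setOf_isWord n k hk), fun k hkn => ?_⟩
  rw [(hf.bijOn_itinerary hn (by omega)).ncard_eq, ncard_setOf_isWord (by omega) hkn]
  refine Finset.sum_congr rfl fun i hi => ?_
  rw [(hf.bijOn_itinerary hn (by have := (Finset.mem_Icc.1 hi).2; omega)).ncard_eq]
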